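/- arXiv:1312.5671 — 2 statements merged into one kernel-verified Lean document; each statement's English description precedes it below -/
import Mathlib

section
/- The set NC_n of noncrossing partitions of {1,…,n}, ordered by refinement, is a lattice: any two noncrossing partitions have a least upper bound and greatest lower bound within NC_n. Moreover the meet in NC_n agrees with the meet in the full partition lattice Π_n. -/
open scoped Classical

instance {α : Type*} [Finite α] : Finite (Setoid α) :=
  Finite.of_injective (fun s : Setoid α => s.r) fun s t h => by
    cases s; cases t; congr

noncomputable instance {α : Type*} [Finite α] : Fintype (Setoid α) := Fintype.ofFinite _

/-- The blocks (equivalence classes) of a partition, as a finset of finsets. -/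
noncomputable def blocks {α : Type*} [Fintype α] (π : Setoid α) : Finset (Finset α) :=
  Finset.univ.image (fun i => Finset.univ.filter (fun j => π.r i j))

/-- The ordered (noncommutative) product of the variables `X i`, `i ∈ b`,
taken in increasing order of the indices. -/
noncomputable def orderedProd {α A : Type*} [LinearOrder α] [Ring A] (b : Finset α)
    (X : α → A) : A :=
  ((b.sort (· ≤ ·)).map X).prod

/-- A partition of `{1,…,n}` (as a setoid on `Fin n`) is noncrossing if there are no
`i < j < k < l` with `i ∼ k`, `j ∼ l` but `i ≁ j`. -/
def IsNoncrossing {n : ℕ} (π : Setoid (Fin n)) : Prop :=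
  ¬ ∃ i j k l : Fin n, i < j ∧ j < k ∧ k < l ∧ π.r i k ∧ π.r j l ∧ ¬ π.r i j

/-!
Noncrossing partitions are closed under arbitrary intersections: a crossing `i < j < k < l`
of `⋂ S` separates `i` from `j` in some member of `S`, where it is then a crossing too.
Hence the meet of `Π_n` restricts to `NC_n`, and the join in `NC_n` is the intersection of
all noncrossing upper bounds (in general coarser than the join in `Π_n`).
-/

section ClosedUnderInf

variable {α : Type*} {P : α → Prop}

theorem Subtype.isGLB_pair_of_inf_mem [SemilatticeInf α] {a b : Subtype P}
    (h : P (a.1 ⊓ b.1)) : IsGLB {a, b} (⟨a.1 ⊓ b.1, h⟩ : Subtype P) := by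
  refine ⟨?_, fun c hc => ?_⟩
  · rintro x (rfl | rfl)
    exacts [inf_le_left (a := x.1), inf_le_right (b := x.1)]
  · have hca : c.1 ≤ a.1 := hc (Set.mem_insert a {b})
    have hcb : c.1 ≤ b.1 := hc (Set.mem_insert_of_mem a rfl)
    exact le_inf hca hcb

theorem Subtype.exists_isLUB_of_sInf_mem [CompleteLattice α]
    (hP : ∀ S : Set α, (∀ s ∈ S, P s) → P (sInf S)) (T : Set (Subtype P)) :
    ∃ j, IsLUB T j := by
  set U : Set α := {u | P u ∧ ∀ t ∈ T, t.1 ≤ u}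
  refine ⟨⟨sInf U, hP U fun u hu => hu.1⟩, fun t ht => ?_, fun u hu => ?_⟩
  · exact le_sInf (a := t.1) fun u hu => hu.2 t ht
  · exact sInf_le (a := u.1) ⟨u.2, fun t ht => hu ht⟩

end ClosedUnderInf

theorem IsNoncrossing.sInf {n : ℕ} {S : Set (Setoid (Fin n))} (hS : ∀ s ∈ S, IsNoncrossing s) :
    IsNoncrossing (sInf S) := by
  rintro ⟨i, j, k, l, hij, hjk, hkl, hik, hjl, hnij⟩
  obtain ⟨s, hs, hsij⟩ : ∃ s ∈ S, ¬ s.r i j := by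
    simpa only [Setoid.sInf_iff, not_forall, exists_prop] using hnij
  exact hS s hs ⟨i, j, k, l, hij, hjk, hkl, Setoid.sInf_iff.mp hik s hs,
    Setoid.sInf_iff.mp hjl s hs, hsij⟩

theorem IsNoncrossing.inf {n : ℕ} {a b : Setoid (Fin n)} (ha : IsNoncrossing a)
    (hb : IsNoncrossing b) : IsNoncrossing (a ⊓ b) := by
  rw [← sInf_pair]
  exact IsNoncrossing.sInf fun s hs => by rcases hs with rfl | rfl <;> assumption

/-- `NC_n`, ordered by refinement (as a subtype of the full partition lattice
`Π_n` realized as setoids on `Fin n`), is a lattice: any two noncrossing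
partitions have a least upper bound and a greatest lower bound within `NC_n`;
moreover the meet in `NC_n` agrees with the meet in `Π_n`. -/
theorem stmt4 {n : ℕ} (π σ : {ρ : Setoid (Fin n) // IsNoncrossing ρ}) :
    (∃ j, IsLUB ({π, σ} : Set {ρ : Setoid (Fin n) // IsNoncrossing ρ}) j) ∧
    (∃ m, IsGLB ({π, σ} : Set {ρ : Setoid (Fin n) // IsNoncrossing ρ}) m ∧
      m.val = π.val ⊓ σ.val) :=
  ⟨Subtype.exists_isLUB_of_sInf_mem (fun _ => IsNoncrossing.sInf) _,
    _, Subtype.isGLB_pair_of_inf_mem (π.2.inf σ.2), rfl⟩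
end

section
/- The Kreweras complement K : NC_n → NC_n is an order-reversing bijection (anti-automorphism) of the noncrossing partition lattice: for π, σ ∈ NC_n, π ≤ σ if and only if K(σ) ≤ K(π). -/
open scoped Classical

/-- No-crossing condition for an arbitrary relation on a linearly ordered type. -/
def IsNCRel {β : Type*} [LinearOrder β] (R : β → β → Prop) : Prop :=
  ¬ ∃ i j k l : β, i < j ∧ j < k ∧ k < l ∧ R i k ∧ R j l ∧ ¬ R i j

/-- The interweaved union of `π` and `σ`: the points of `π` are placed at the odd
positions `1,3,…,2n-1` and the points of `σ` at the even positions `2,4,…,2n`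
(as a relation on `Fin (2n)`). -/
def interRel {n : ℕ} (π σ : Setoid (Fin n)) : Fin (2 * n) → Fin (2 * n) → Prop :=
  fun x y =>
    (∃ i j : Fin n, x = ⟨2 * i.val, by have := i.isLt; omega⟩ ∧
        y = ⟨2 * j.val, by have := j.isLt; omega⟩ ∧ π.r i j) ∨
    (∃ i j : Fin n, x = ⟨2 * i.val + 1, by have := i.isLt; omega⟩ ∧
        y = ⟨2 * j.val + 1, by have := j.isLt; omega⟩ ∧ σ.r i j)

/-- `σ` is the Kreweras complement of `π`: the maximal noncrossing partition such
that the interweaved union `π ∪̃ σ` is noncrossing. -/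
def IsKreweras {n : ℕ} (π σ : Setoid (Fin n)) : Prop :=
  IsNoncrossing σ ∧ IsNCRel (interRel π σ) ∧
    ∀ σ' : Setoid (Fin n), IsNoncrossing σ' → IsNCRel (interRel π σ') → σ' ≤ σ

/-!
The Kreweras complement can be written down explicitly: two bars `x̄`, `ȳ` lie in one block iff
no chord of `π` separates them. This is the largest partition whose interweaving with `π` is
noncrossing, so `K` agrees with it on `NC_n`, and it is visibly antitone. Conversely `π` is
recovered from it: if `x < y` lie in different blocks of a noncrossing `π`, the gap of the block
of `x` that contains `y` is a union of blocks, so the bars at its two ends are related in the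
complement while exactly one of `x`, `y` lies between them. Hence `K` is an order embedding of the
finite set `NC_n` into itself, and therefore a bijection.
-/

open Set

section UnionOfBlocks

variable {α : Type*}

def IsUnionOfBlocks (π : Setoid α) (S : Set α) : Prop :=
  ∀ ⦃u v⦄, π.r u v → u ∈ S → v ∈ S

theorem IsUnionOfBlocks.compl {π : Setoid α} {S : Set α} (h : IsUnionOfBlocks π S) :
    IsUnionOfBlocks π Sᶜ :=
  fun _ _ huv hu hv => hu (h (π.symm' huv) hv)

end UnionOfBlocks

theorem IsNCRel.rel_of_lt {β : Type*} [LinearOrder β] {R : β → β → Prop} (h : IsNCRel R)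
    {i j k l : β} (hij : i < j) (hjk : j < k) (hkl : k < l) (hik : R i k) (hjl : R j l) :
    R i j := by
  by_contra hc
  exact h ⟨i, j, k, l, hij, hjk, hkl, hik, hjl, hc⟩

section Kreweras

variable {n : ℕ}

theorem IsNoncrossing.rel_of_lt {π : Setoid (Fin n)} (h : IsNoncrossing π) {i j k l : Fin n}
    (hij : i < j) (hjk : j < k) (hkl : k < l) (hik : π.r i k) (hjl : π.r j l) : π.r i j :=
  IsNCRel.rel_of_lt h hij hjk hkl hik hjl

/-- The bar `x̄`, placed between `x` and `x + 1`, lies under the chord `a < b` iff `a ≤ x < b`,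
so two bars are related iff no chord of `π` separates them. -/
def kreweras (π : Setoid (Fin n)) : Setoid (Fin n) where
  r x y := ∀ a b, π.r a b → (a ≤ x ∧ x < b ↔ a ≤ y ∧ y < b)
  iseqv := ⟨fun _ _ _ _ => Iff.rfl, fun h a b hab => (h a b hab).symm,
    fun h₁ h₂ a b hab => (h₁ a b hab).trans (h₂ a b hab)⟩

theorem kreweras_antitone : Antitone (kreweras (n := n)) :=
  fun _ _ h _ _ hxy a b hab => hxy a b (h hab)

theorem isNoncrossing_kreweras (π : Setoid (Fin n)) : IsNoncrossing (kreweras π) := by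
  rintro ⟨i, j, k, l, hij, hjk, hkl, hik, hjl, hij'⟩
  refine hij' fun a b hab => ?_
  have := hik a b hab
  have := hjl a b hab
  omega

theorem kreweras_rel_of_isUnionOfBlocks {π : Setoid (Fin n)} {S : Set (Fin n)}
    (hS : IsUnionOfBlocks π S) {c c' : Fin n} (hcc' : c ≤ c')
    (hmem : ∀ z, z ∈ S ↔ c < z ∧ z ≤ c') : (kreweras π).r c c' := by
  intro u v huv
  have huv' := @hS u v huv
  have hvu := @hS v u (π.symm' huv)
  rw [hmem, hmem] at huv' hvu
  omega

theorem interRel_iff {π σ : Setoid (Fin n)} {x y : Fin (2 * n)} :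
    interRel π σ x y ↔
      (∃ i j : Fin n, x.val = 2 * i ∧ y.val = 2 * j ∧ π.r i j) ∨
      (∃ i j : Fin n, x.val = 2 * i + 1 ∧ y.val = 2 * j + 1 ∧ σ.r i j) := by
  simp only [interRel, Fin.ext_iff]

theorem not_interRel_of_parity_ne {π σ : Setoid (Fin n)} {x y : Fin (2 * n)}
    (h : x.val % 2 ≠ y.val % 2) : ¬ interRel π σ x y := by
  rw [interRel_iff]
  rintro (⟨i, j, hx, hy, -⟩ | ⟨i, j, hx, hy, -⟩) <;> omega

theorem le_kreweras_of_isNCRel_interRel {π σ : Setoid (Fin n)}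
    (h : IsNCRel (interRel π σ)) : σ ≤ kreweras π := by
  have under : ∀ x y a b, σ.r x y → π.r a b → a ≤ x → x < b → a ≤ y ∧ y < b := by
    intro x y a b hxy hab hax hxb
    have ha := a.isLt; have hb := b.isLt; have hx := x.isLt; have hy := y.isLt
    by_contra hy'
    rcases Nat.lt_or_ge y.val a.val with hya | hay
    · exact not_interRel_of_parity_ne (by dsimp only; omega) <|
        h.rel_of_lt (i := ⟨2 * y + 1, by omega⟩) (j := ⟨2 * a, by omega⟩)
          (k := ⟨2 * x + 1, by omega⟩) (l := ⟨2 * b, by omega⟩)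
          (Fin.mk_lt_mk.2 (by omega)) (Fin.mk_lt_mk.2 (by omega)) (Fin.mk_lt_mk.2 (by omega))
          (interRel_iff.2 (.inr ⟨y, x, rfl, rfl, σ.symm' hxy⟩))
          (interRel_iff.2 (.inl ⟨a, b, rfl, rfl, hab⟩))
    · exact not_interRel_of_parity_ne (by dsimp only; omega) <|
        h.rel_of_lt (i := ⟨2 * a, by omega⟩) (j := ⟨2 * x + 1, by omega⟩)
          (k := ⟨2 * b, by omega⟩) (l := ⟨2 * y + 1, by omega⟩)
          (Fin.mk_lt_mk.2 (by omega)) (Fin.mk_lt_mk.2 (by omega)) (Fin.mk_lt_mk.2 (by omega))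
          (interRel_iff.2 (.inl ⟨a, b, rfl, rfl, hab⟩))
          (interRel_iff.2 (.inr ⟨x, y, rfl, rfl, hxy⟩))
  exact fun x y hxy a b hab =>
    ⟨fun ⟨hax, hxb⟩ => under x y a b hxy hab hax hxb,
      fun ⟨hay, hyb⟩ => under y x a b (σ.symm' hxy) hab hay hyb⟩

theorem isNCRel_interRel_of_le_kreweras {π σ : Setoid (Fin n)} (hπ : IsNoncrossing π)
    (hσ : IsNoncrossing σ) (h : σ ≤ kreweras π) : IsNCRel (interRel π σ) := by
  rintro ⟨i, j, k, l, hij, hjk, hkl, hik, hjl, hij'⟩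
  rw [interRel_iff] at hik hjl
  rcases hik with ⟨a, c, hi, hk, hac⟩ | ⟨a, c, hi, hk, hac⟩ <;>
    rcases hjl with ⟨b, d, hj, hl, hbd⟩ | ⟨b, d, hj, hl, hbd⟩
  · exact hij' (interRel_iff.2
      (.inl ⟨a, b, hi, hj, hπ.rel_of_lt (by omega) (by omega) (by omega) hac hbd⟩))
  · have := h hbd a c hac
    omega
  · have := h hac b d hbd
    omega
  · exact hij' (interRel_iff.2
      (.inr ⟨a, b, hi, hj, hσ.rel_of_lt (by omega) (by omega) (by omega) hac hbd⟩))

theorem IsKreweras.eq_kreweras {π σ : Setoid (Fin n)} (hπ : IsNoncrossing π)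
    (h : IsKreweras π σ) : σ = kreweras π :=
  le_antisymm (le_kreweras_of_isNCRel_interRel h.2.1)
    (h.2.2 _ (isNoncrossing_kreweras π)
      (isNCRel_interRel_of_le_kreweras hπ (isNoncrossing_kreweras π) le_rfl))

theorem isUnionOfBlocks_Ioo {π : Setoid (Fin n)} (hπ : IsNoncrossing π) {a b : Fin n}
    (hab : π.r a b) (hlt : a < b) (hgap : ∀ z, a < z → z < b → ¬ π.r a z) :
    IsUnionOfBlocks π (Ioo a b) := by
  rintro u v huv ⟨hau, hub⟩
  have hau' : ¬ π.r a u := hgap u hau hub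
  by_contra hv
  rcases lt_trichotomy v a with hva | rfl | hav
  · exact hau' (π.trans' (π.symm' (hπ.rel_of_lt hva hau hub (π.symm' huv) hab)) (π.symm' huv))
  · exact hau' (π.symm' huv)
  rcases lt_trichotomy v b with hvb | rfl | hbv
  · exact hv ⟨hav, hvb⟩
  · exact hau' (π.trans' hab (π.symm' huv))
  · exact hau' (hπ.rel_of_lt hau hub hbv hab huv)

theorem isUnionOfBlocks_Icc {π : Setoid (Fin n)} (hπ : IsNoncrossing π) {m a : Fin n}
    (hma : π.r m a) (hblock : ∀ z, π.r m z → z ∈ Icc m a) :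
    IsUnionOfBlocks π (Icc m a) := by
  rintro u v huv ⟨hmu, hua⟩
  by_cases hmu' : π.r m u
  · exact hblock v (π.trans' hmu' huv)
  have hmu : m < u := lt_of_le_of_ne hmu fun h => hmu' (h ▸ π.refl' m)
  have hua : u < a := lt_of_le_of_ne hua fun h => hmu' (h ▸ hma)
  by_contra hv
  rcases lt_or_gt_of_ne (fun h : v = m => hmu' (h ▸ π.symm' huv)) with hvm | hmv
  · exact hmu' (π.trans' (π.symm' (hπ.rel_of_lt hvm hmu hua (π.symm' huv) hma)) (π.symm' huv))
  · have hav : a < v := lt_of_not_ge fun hva => hv ⟨hmv.le, hva⟩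
    exact hmu' (hπ.rel_of_lt hmu hua hav hma huv)

theorem exists_kreweras_rel_separating {π : Setoid (Fin n)} (hπ : IsNoncrossing π)
    {x y : Fin n} (hxy : x < y) (hr : ¬ π.r x y) :
    ∃ c c', (kreweras π).r c c' ∧ ¬ (c < x ∧ x ≤ c' ↔ c < y ∧ y ≤ c') := by
  have hy := y.isLt
  obtain ⟨a, ⟨hxa, hay⟩, ha_max⟩ := Set.exists_max_image {z | π.r x z ∧ z < y} id
    (Set.toFinite _) ⟨x, π.refl' x, hxy⟩
  have hxa_le : x ≤ a := ha_max x ⟨π.refl' x, hxy⟩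
  -- `y` lies in the gap of the block of `x` between `a` and `b`; the bars just after `a` and just
  -- before `b` are related and separate `x` from `y`. If the block has no point beyond `y`, the
  -- gap wraps around, and its second end is the bar just before the minimum `m` of the block
  -- (the last bar if `m = 0`).
  by_cases hbeyond : ∃ z, π.r x z ∧ y < z
  · obtain ⟨b, ⟨hxb, hyb⟩, hb_min⟩ := Set.exists_min_image {z | π.r x z ∧ y < z} id
      (Set.toFinite _) hbeyond
    have hgap : IsUnionOfBlocks π (Ioo a b) := by
      refine isUnionOfBlocks_Ioo hπ (π.trans' (π.symm' hxa) hxb) (hay.trans hyb)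
        fun z haz hzb hz => ?_
      have hxz := π.trans' hxa hz
      rcases lt_trichotomy z y with hzy | rfl | hyz
      · exact absurd (ha_max z ⟨hxz, hzy⟩) (not_le.2 haz)
      · exact hr hxz
      · exact absurd (hb_min z ⟨hxz, hyz⟩) (not_le.2 hzb)
    obtain ⟨c', hc'⟩ : ∃ c' : Fin n, c'.val = b - 1 := ⟨⟨b - 1, by omega⟩, rfl⟩
    exact ⟨a, c', kreweras_rel_of_isUnionOfBlocks hgap (by omega)
      (fun z => by rw [mem_Ioo]; omega), by omega⟩
  · push Not at hbeyond
    obtain ⟨m, hxm, hm_min⟩ := Set.exists_min_image {z | π.r x z} id (Set.toFinite _)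
      ⟨x, π.refl' x⟩
    have hhull : IsUnionOfBlocks π (Icc m a) := by
      refine isUnionOfBlocks_Icc hπ (π.trans' (π.symm' hxm) hxa) fun z hz => ?_
      have hxz := π.trans' hxm hz
      refine ⟨hm_min z hxz, ha_max z ⟨hxz, lt_of_le_of_ne (hbeyond z hxz) ?_⟩⟩
      rintro rfl
      exact hr hxz
    have hmx : m ≤ x := hm_min x (π.refl' x)
    rcases Nat.eq_zero_or_pos m.val with hm | hm
    · obtain ⟨c', hc'⟩ : ∃ c' : Fin n, c'.val = n - 1 := ⟨⟨n - 1, by omega⟩, rfl⟩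
      exact ⟨a, c', kreweras_rel_of_isUnionOfBlocks hhull.compl (by omega)
        (fun z => by rw [mem_compl_iff, mem_Icc]; omega), by omega⟩
    · obtain ⟨c, hc⟩ : ∃ c : Fin n, c.val = m - 1 := ⟨⟨m - 1, by omega⟩, rfl⟩
      exact ⟨c, a, kreweras_rel_of_isUnionOfBlocks hhull (by omega)
        (fun z => by rw [mem_Icc]; omega), by omega⟩

theorem kreweras_rel_not_separating {π : Setoid (Fin n)} {x y c c' : Fin n} (hxy : π.r x y)
    (hcc' : (kreweras π).r c c') : (c < x ∧ x ≤ c' ↔ c < y ∧ y ≤ c') := by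
  have := hcc' x y hxy
  have := hcc' y x (π.symm' hxy)
  omega

theorem le_of_kreweras_le {π σ : Setoid (Fin n)} (hσ : IsNoncrossing σ)
    (h : kreweras σ ≤ kreweras π) : π ≤ σ := by
  intro x y hxy
  by_contra hr
  rcases lt_trichotomy x y with hlt | rfl | hgt
  · obtain ⟨c, c', hcc', hsep⟩ := exists_kreweras_rel_separating hσ hlt hr
    exact hsep (kreweras_rel_not_separating hxy (h hcc'))
  · exact hr (σ.refl' x)
  · obtain ⟨c, c', hcc', hsep⟩ := exists_kreweras_rel_separating hσ hgt (mt σ.symm' hr)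
    exact hsep (kreweras_rel_not_separating hxy (h hcc')).symm

end Kreweras

/-- The Kreweras complement is an order-reversing bijection of the noncrossing
partition lattice: `π ≤ σ ↔ K(σ) ≤ K(π)`. -/
theorem stmt15 {n : ℕ} (K : Setoid (Fin n) → Setoid (Fin n))
    (hK : ∀ π, IsNoncrossing π → IsKreweras π (K π)) :
    (∀ π σ : Setoid (Fin n), IsNoncrossing π → IsNoncrossing σ →
      (π ≤ σ ↔ K σ ≤ K π)) ∧
    Set.BijOn K {π | IsNoncrossing π} {π | IsNoncrossing π} := by
  have hK_eq : ∀ π, IsNoncrossing π → K π = kreweras π := fun π hπ =>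
    (hK π hπ).eq_kreweras hπ
  have hanti : ∀ π σ : Setoid (Fin n), IsNoncrossing π → IsNoncrossing σ →
      (π ≤ σ ↔ K σ ≤ K π) := by
    intro π σ hπ hσ
    rw [hK_eq π hπ, hK_eq σ hσ]
    exact ⟨fun h => kreweras_antitone h, le_of_kreweras_le hσ⟩
  have hinj : InjOn K {π | IsNoncrossing π} := fun π hπ σ hσ h =>
    le_antisymm ((hanti π σ hπ hσ).2 h.ge) ((hanti σ π hσ hπ).2 h.le)
  exact ⟨hanti, ((Set.toFinite _).injOn_iff_bijOn_of_mapsTo fun π hπ => (hK π hπ).1).1 hinj⟩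
end
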